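/- arXiv:1606.06099 — 4 statements merged into one kernel-verified Lean document; each statement's English description precedes it below -/
import Mathlib

section
/- For a full lattice Λ ⊂ ℝ^n and σ > 0, the maximum over x ∈ ℝ^n of the Λ-periodized Gaussian g_n(Λ + x; σ) is attained at x ∈ Λ, i.e., g_n(Λ + x; σ) ≤ g_n(Λ; σ) for all x ∈ ℝ^n. -/
/-!
Put `F(x) = ∑_z e_t(Mz + x)` with `e_t(v) = exp(-‖v‖² / t)`. The parallelogram law gives
`e_t(a) e_t(b) = e_{2t}(a + b) e_{2t}(a - b)`, and as `(a, b)` runs over pairs of integer vectors,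
`(a + b, a - b)` runs exactly once over the pairs `(c + 2j, c + 2k)` with `c ∈ {0, 1}ⁿ`. Hence
`F(u) F(v) = ∑_c P_c(u + v) P_c(u - v)` with `P_c(y) = ∑_j e_{2t}(M(c + 2j) + y)`, and
Cauchy–Schwarz over `c` gives `F(x)⁴ ≤ F(2x) F(0)³`. As `F` is `Λ`-periodic it is bounded, and its
supremum `s` then satisfies `s⁴ ≤ s F(0)³`, i.e. `s ≤ F(0)`.

The sums are taken in `ℝ≥0∞`, so that rearranging them needs no summability side conditions.
-/

open Real

/-- The `n`-dimensional spherical Gaussian density `g_n(x; σ)`. -/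
noncomputable def gaussDensity (n : ℕ) (σ : ℝ) (v : Fin n → ℝ) : ℝ :=
  (2 * π * σ ^ 2) ^ (-(n : ℝ) / 2) * Real.exp (-(∑ i, v i ^ 2) / (2 * σ ^ 2))

open scoped ENNReal

theorem ENNReal.sum_mul_sq_le_sq_mul_sq {ι : Type*} (s : Finset ι) (f g : ι → ℝ≥0∞) :
    (∑ i ∈ s, f i * g i) ^ 2 ≤ (∑ i ∈ s, f i ^ 2) * ∑ i ∈ s, g i ^ 2 := by
  have h := ENNReal.inner_le_Lp_mul_Lq s f g Real.HolderConjugate.two_two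
  simp only [ENNReal.rpow_two] at h
  calc (∑ i ∈ s, f i * g i) ^ 2
      ≤ ((∑ i ∈ s, f i ^ 2) ^ (1 / 2 : ℝ) * (∑ i ∈ s, g i ^ 2) ^ (1 / 2 : ℝ)) ^ 2 := by gcongr
    _ = (∑ i ∈ s, f i ^ 2) * ∑ i ∈ s, g i ^ 2 := by
      rw [mul_pow, ← ENNReal.rpow_two, ← ENNReal.rpow_two, ← ENNReal.rpow_mul,
        ← ENNReal.rpow_mul]
      norm_num

theorem ENNReal.iSup_le_of_pow_succ_le {α : Type*} {f : α → ℝ≥0∞} {a : ℝ≥0∞} {k : ℕ}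
    (hk : k ≠ 0) (hf : ⨆ x, f x ≠ ∞) (h : ∀ x, f x ^ (k + 1) ≤ (⨆ y, f y) * a ^ k) :
    ⨆ x, f x ≤ a := by
  set s := ⨆ x, f x
  rcases eq_or_ne s 0 with hs | hs
  · simp [hs]
  have hpow : s * s ^ k ≤ s * a ^ k := by
    rw [← pow_succ', ENNReal.iSup_pow_of_ne_zero k.succ_ne_zero]
    exact iSup_le h
  exact (ENNReal.pow_le_pow_left_iff hk).1 ((ENNReal.mul_le_mul_iff_right hs hf).1 hpow)

theorem ENNReal.tsum_pi_prod {ι α : Type*} [Fintype ι] (g : ι → α → ℝ≥0∞) :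
    ∑' z : ι → α, ∏ i, g i (z i) = ∏ i, ∑' a, g i a := by
  refine Fintype.induction_empty_option
    (P := fun ι _ => ∀ g : ι → α → ℝ≥0∞, ∑' z : ι → α, ∏ i, g i (z i) = ∏ i, ∑' a, g i a)
    (fun ι κ _ e ih g => ?_) (fun g => by simp) (fun ι _ ih g => ?_) ι g
  · let := Fintype.ofEquiv κ e.symm
    rw [← (e.arrowCongr (Equiv.refl α)).tsum_eq,
      ← Fintype.prod_equiv e (fun i => ∑' a, g (e i) a) _ fun _ => rfl, ← ih]
    refine tsum_congr fun z => (Fintype.prod_equiv e _ _ fun i => ?_).symm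
    simp
  · rw [← (Equiv.piOptionEquivProd (β := fun _ => α)).symm.tsum_eq, ENNReal.tsum_prod',
      Fintype.prod_option, ← ih, ← ENNReal.tsum_mul_right]
    refine tsum_congr fun a => ?_
    rw [← ENNReal.tsum_mul_left]
    refine tsum_congr fun z => ?_
    simp [Fintype.prod_option]

theorem ENNReal.tsum_mul_tsum {α β : Type*} (f : α → ℝ≥0∞) (g : β → ℝ≥0∞) :
    (∑' a, f a) * ∑' b, g b = ∑' p : α × β, f p.1 * g p.2 := by
  rw [ENNReal.tsum_prod', ← ENNReal.tsum_mul_right]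
  exact tsum_congr fun a => ENNReal.tsum_mul_left.symm

namespace PeriodizedGaussian

variable {ι κ : Type*}

def oddPart (c : ι → Bool) : ι → ℤ := fun i => ((c i).toNat : ℤ)

def parityEquiv (ι : Type*) : (ι → Bool) × (ι → ℤ) × (ι → ℤ) ≃ (ι → ℤ) × (ι → ℤ) where
  toFun p := (oddPart p.1 + p.2.1 + p.2.2, p.2.1 - p.2.2)
  invFun q := (fun i => (q.1 i + q.2 i) % 2 = 1, fun i => (q.1 i + q.2 i) / 2,
    fun i => (q.1 i - q.2 i) / 2)
  left_inv := by
    rintro ⟨c, j, k⟩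
    refine Prod.ext (funext fun i => ?_) (Prod.ext (funext fun i => ?_) (funext fun i => ?_)) <;>
      cases h : c i <;>
      simp only [oddPart, h, Pi.add_apply, Pi.sub_apply, Bool.toNat_false, Bool.toNat_true,
        Nat.cast_zero, Nat.cast_one, decide_eq_true_eq, decide_eq_false_iff_not] <;>
      omega
  right_inv := by
    rintro ⟨a, b⟩
    refine Prod.ext (funext fun i => ?_) (funext fun i => ?_) <;>
      simp only [oddPart, Pi.add_apply, Pi.sub_apply]
    · rcases Int.emod_two_eq (a i + b i) with h | h <;>
        simp only [h, decide_true, decide_false, zero_ne_one, Bool.toNat_false, Bool.toNat_true,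
          Nat.cast_zero, Nat.cast_one] <;>
        omega
    · omega

theorem parityEquiv_fst_add_snd (p : (ι → Bool) × (ι → ℤ) × (ι → ℤ)) :
    (parityEquiv ι p).1 + (parityEquiv ι p).2 = oddPart p.1 + 2 • p.2.1 := by
  simp only [parityEquiv, Equiv.coe_fn_mk]
  abel

theorem parityEquiv_fst_sub_snd (p : (ι → Bool) × (ι → ℤ) × (ι → ℤ)) :
    (parityEquiv ι p).1 - (parityEquiv ι p).2 = oddPart p.1 + 2 • p.2.2 := by
  simp only [parityEquiv, Equiv.coe_fn_mk]
  abel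

variable {E : Type*} [AddCommGroup E] (L : (ι → ℤ) →+ E) (e e' : E → ℝ≥0∞)

noncomputable def periodize (x : E) : ℝ≥0∞ := ∑' z, e (L z + x)

noncomputable def parityClassSum (x : E) (c : ι → Bool) : ℝ≥0∞ :=
  ∑' j, e (L (oddPart c + 2 • j) + x)

theorem periodize_lattice_add (w : ι → ℤ) (x : E) :
    periodize L e (L w + x) = periodize L e x := by
  rw [periodize, periodize, ← (Equiv.addRight w).tsum_eq fun z => e (L z + x)]
  exact tsum_congr fun z => by rw [Equiv.coe_addRight, map_add, add_assoc]

variable {e e'}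

theorem periodize_mul_periodize [Fintype ι] [DecidableEq ι]
    (he : ∀ a b, e a * e b = e' (a + b) * e' (a - b)) (u v : E) :
    periodize L e u * periodize L e v =
      ∑ c, parityClassSum L e' (u + v) c * parityClassSum L e' (u - v) c := by
  calc periodize L e u * periodize L e v
      = ∑' p : (ι → ℤ) × (ι → ℤ),
          e' (L (p.1 + p.2) + (u + v)) * e' (L (p.1 - p.2) + (u - v)) := by
        rw [periodize, periodize, ENNReal.tsum_mul_tsum]
        refine tsum_congr fun p => ?_
        rw [he, map_add, map_sub]
        congr 2 <;> abel
    _ = ∑' p : (ι → Bool) × (ι → ℤ) × (ι → ℤ),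
          e' (L (oddPart p.1 + 2 • p.2.1) + (u + v)) *
            e' (L (oddPart p.1 + 2 • p.2.2) + (u - v)) := by
        rw [← (parityEquiv ι).tsum_eq]
        simp only [parityEquiv_fst_add_snd, parityEquiv_fst_sub_snd]
    _ = _ := by
        rw [ENNReal.tsum_prod', tsum_fintype]
        refine Finset.sum_congr rfl fun c _ => ?_
        rw [parityClassSum, parityClassSum, ENNReal.tsum_mul_tsum]

theorem periodize_pow_four_le [Fintype ι] [DecidableEq ι]
    (he : ∀ a b, e a * e b = e' (a + b) * e' (a - b)) (x : E) :
    periodize L e x ^ 4 ≤ periodize L e (x + x) * periodize L e 0 ^ 3 := by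
  have hx := periodize_mul_periodize L he x x
  have h2x := periodize_mul_periodize L he (x + x) 0
  have h0 := periodize_mul_periodize L he 0 0
  simp only [sub_self, add_zero, sub_zero, ← sq] at hx h2x h0
  calc periodize L e x ^ 4 = (periodize L e x ^ 2) ^ 2 := by ring
    _ ≤ (periodize L e (x + x) * periodize L e 0) * periodize L e 0 ^ 2 := by
      rw [hx, h2x, h0]
      exact ENNReal.sum_mul_sq_le_sq_mul_sq _ _ _
    _ = periodize L e (x + x) * periodize L e 0 ^ 3 := by ring

theorem periodize_le_periodize_zero [Fintype ι] [DecidableEq ι]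
    (he : ∀ a b, e a * e b = e' (a + b) * e' (a - b)) (hbdd : ⨆ x, periodize L e x ≠ ∞) (x : E) :
    periodize L e x ≤ periodize L e 0 := by
  refine (le_iSup (periodize L e) x).trans (ENNReal.iSup_le_of_pow_succ_le three_ne_zero hbdd
    fun y => (periodize_pow_four_le L he y).trans ?_)
  gcongr
  exact le_iSup (periodize L e) (y + y)

section Gaussian

open Matrix

variable [Fintype ι]

def sqNorm (v : ι → ℝ) : ℝ := ∑ i, v i ^ 2

theorem sqNorm_nonneg (v : ι → ℝ) : 0 ≤ sqNorm v :=
  Finset.sum_nonneg fun i _ => sq_nonneg (v i)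

theorem sqNorm_add_add_sqNorm_sub (a b : ι → ℝ) :
    sqNorm (a + b) + sqNorm (a - b) = 2 * (sqNorm a + sqNorm b) := by
  simp only [sqNorm, ← Finset.sum_add_distrib, Finset.mul_sum, Pi.add_apply, Pi.sub_apply]
  exact Finset.sum_congr rfl fun i _ => by ring

theorem sqNorm_le_two_mul_sqNorm_add_add (a b : ι → ℝ) :
    sqNorm a ≤ 2 * sqNorm (a + b) + 2 * sqNorm b := by
  have h := sqNorm_add_add_sqNorm_sub (a + b) b
  rw [add_sub_cancel_right] at h
  linarith [sqNorm_nonneg (a + b + b)]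

theorem sqNorm_mulVec_le [Fintype κ] (M : Matrix κ ι ℝ) (v : ι → ℝ) :
    sqNorm (M *ᵥ v) ≤ (∑ i, sqNorm (M i)) * sqNorm v := by
  rw [sqNorm, Finset.sum_mul]
  refine Finset.sum_le_sum fun i _ => ?_
  simpa [mulVec, dotProduct, sqNorm] using Finset.sum_mul_sq_le_sq_mul_sq Finset.univ (M i) v

theorem exists_pos_forall_sqNorm_le_mul_sqNorm_mulVec [DecidableEq ι] {M : Matrix ι ι ℝ}
    (hM : IsUnit M.det) : ∃ K > 0, ∀ v : ι → ℝ, sqNorm v ≤ K * sqNorm (M *ᵥ v) := by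
  have hK : 0 ≤ ∑ i, sqNorm (M⁻¹ i) := Finset.sum_nonneg fun i _ => sqNorm_nonneg _
  refine ⟨∑ i, sqNorm (M⁻¹ i) + 1, by positivity, fun v => ?_⟩
  have hv := sqNorm_mulVec_le M⁻¹ (M *ᵥ v)
  rw [mulVec_mulVec, nonsing_inv_mul M hM, one_mulVec] at hv
  nlinarith [sqNorm_nonneg (M *ᵥ v)]

noncomputable def gaussWeight (t : ℝ) (v : ι → ℝ) : ℝ≥0∞ :=
  ENNReal.ofReal (exp (-sqNorm v / t))

theorem gaussWeight_mul_gaussWeight (t : ℝ) (a b : ι → ℝ) :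
    gaussWeight t a * gaussWeight t b =
      gaussWeight (2 * t) (a + b) * gaussWeight (2 * t) (a - b) := by
  simp only [gaussWeight, ← ENNReal.ofReal_mul (exp_nonneg _), ← exp_add]
  rw [← add_div, ← add_div, ← neg_add, ← neg_add, sqNorm_add_add_sqNorm_sub, ← mul_neg,
    mul_div_mul_left _ _ two_ne_zero]

theorem gaussWeight_add_le {t : ℝ} (ht : 0 < t) (a w : ι → ℝ) :
    gaussWeight t (a + w) ≤ ENNReal.ofReal (exp (sqNorm w / t)) * gaussWeight (2 * t) a := by
  rw [gaussWeight, gaussWeight, ← ENNReal.ofReal_mul (exp_nonneg _), ← exp_add]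
  gcongr
  calc -sqNorm (a + w) / t ≤ (sqNorm w - sqNorm a / 2) / t := by
        gcongr
        linarith [sqNorm_le_two_mul_sqNorm_add_add a w]
    _ = sqNorm w / t + -sqNorm a / (2 * t) := by
        field_simp
        ring

def latticeMap (M : Matrix κ ι ℝ) : (ι → ℤ) →+ (κ → ℝ) where
  toFun z := M *ᵥ fun j => (z j : ℝ)
  map_zero' := by
    simp only [Pi.zero_apply, Int.cast_zero]
    exact mulVec_zero M
  map_add' z w := by
    simp only [Pi.add_apply, Int.cast_add]
    exact mulVec_add M _ _

theorem latticeMap_apply (M : Matrix κ ι ℝ) (z : ι → ℤ) :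
    latticeMap M z = M *ᵥ fun j => (z j : ℝ) :=
  rfl

theorem summable_exp_neg_mul_int_sq {β : ℝ} (hβ : 0 < β) :
    Summable fun k : ℤ => exp (-β * k ^ 2) := by
  have hnat : Summable fun m : ℕ => exp (-β * (m : ℝ) ^ 2) :=
    summable_exp_nat_mul_of_ge (neg_lt_zero.2 hβ) fun m => by
      exact_mod_cast Nat.le_self_pow two_ne_zero m
  exact hnat.of_nat_of_neg (by simpa using hnat)

theorem tsum_ofReal_exp_neg_mul_int_sq_ne_top {β : ℝ} (hβ : 0 < β) :
    ∑' k : ℤ, ENNReal.ofReal (exp (-β * k ^ 2)) ≠ ∞ := by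
  rw [← ENNReal.ofReal_tsum_of_nonneg (fun _ => exp_nonneg _) (summable_exp_neg_mul_int_sq hβ)]
  exact ENNReal.ofReal_ne_top

theorem periodize_gaussWeight_zero_ne_top [DecidableEq ι] {M : Matrix ι ι ℝ} (hM : IsUnit M.det)
    {t : ℝ} (ht : 0 < t) : periodize (latticeMap M) (gaussWeight t) 0 ≠ ∞ := by
  obtain ⟨K, hK, hMK⟩ := exists_pos_forall_sqNorm_le_mul_sqNorm_mulVec hM
  set β := 1 / (K * t) with hβ
  have hterm : ∀ z : ι → ℤ, gaussWeight t (latticeMap M z + 0) ≤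
      ∏ i, ENNReal.ofReal (exp (-β * (z i : ℝ) ^ 2)) := by
    intro z
    rw [← ENNReal.ofReal_prod_of_nonneg fun _ _ => exp_nonneg _, ← exp_sum, add_zero,
      gaussWeight, ← Finset.mul_sum, neg_mul]
    gcongr
    calc -sqNorm (latticeMap M z) / t = -(β * (K * sqNorm (latticeMap M z))) := by
          rw [hβ]
          field_simp
      _ ≤ -(β * ∑ i, (z i : ℝ) ^ 2) := by
          gcongr
          exact hMK _
  refine ne_top_of_le_ne_top ?_ (ENNReal.tsum_le_tsum hterm)
  rw [ENNReal.tsum_pi_prod fun _ (k : ℤ) => ENNReal.ofReal (exp (-β * k ^ 2))]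
  exact ENNReal.prod_ne_top fun _ _ => tsum_ofReal_exp_neg_mul_int_sq_ne_top (by positivity)

theorem exists_eq_latticeMap_add [DecidableEq ι] {M : Matrix ι ι ℝ} (hM : IsUnit M.det)
    (x : ι → ℝ) : ∃ z w, x = latticeMap M z + w ∧
      sqNorm w ≤ (∑ i, sqNorm (M i)) * Fintype.card ι := by
  set u := M⁻¹ *ᵥ x
  refine ⟨fun j => ⌊u j⌋, M *ᵥ fun j => Int.fract (u j), ?_, ?_⟩
  · have hu : (fun j => (⌊u j⌋ : ℝ)) + (fun j => Int.fract (u j)) = u :=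
      funext fun j => Int.floor_add_fract (u j)
    rw [latticeMap_apply, ← mulVec_add, hu, mulVec_mulVec, mul_nonsing_inv M hM, one_mulVec]
  · refine (sqNorm_mulVec_le M _).trans ?_
    gcongr
    · exact Finset.sum_nonneg fun i _ => sqNorm_nonneg _
    · calc sqNorm (fun j => Int.fract (u j)) ≤ ∑ _ : ι, (1 : ℝ) :=
            Finset.sum_le_sum fun j _ =>
              pow_le_one₀ (Int.fract_nonneg _) (Int.fract_lt_one _).le
        _ = Fintype.card ι := by simp

theorem iSup_periodize_gaussWeight_ne_top [DecidableEq ι] {M : Matrix ι ι ℝ} (hM : IsUnit M.det)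
    {t : ℝ} (ht : 0 < t) : ⨆ x, periodize (latticeMap M) (gaussWeight t) x ≠ ∞ := by
  set R := (∑ i, sqNorm (M i)) * Fintype.card ι
  refine ne_top_of_le_ne_top (b := ENNReal.ofReal (exp (R / t)) *
    periodize (latticeMap M) (gaussWeight (2 * t)) 0) (ENNReal.mul_ne_top ENNReal.ofReal_ne_top
    (periodize_gaussWeight_zero_ne_top hM (mul_pos two_pos ht))) (iSup_le fun x => ?_)
  obtain ⟨z, w, rfl, hw⟩ := exists_eq_latticeMap_add hM x
  rw [periodize_lattice_add, periodize, periodize, ← ENNReal.tsum_mul_left]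
  refine ENNReal.tsum_le_tsum fun z => (gaussWeight_add_le ht _ w).trans ?_
  rw [add_zero]
  gcongr

end Gaussian

theorem tsum_gaussDensity_eq (n : ℕ) (σ : ℝ) (M : Matrix (Fin n) (Fin n) ℝ) (x : Fin n → ℝ) :
    ∑' z : Fin n → ℤ, gaussDensity n σ (M.mulVec (fun j => (z j : ℝ)) + x) =
      (2 * π * σ ^ 2) ^ (-(n : ℝ) / 2) *
        (periodize (latticeMap M) (gaussWeight (2 * σ ^ 2)) x).toReal := by
  simp only [periodize, gaussWeight]
  rw [ENNReal.tsum_toReal_eq fun _ => ENNReal.ofReal_ne_top, ← tsum_mul_left]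
  refine tsum_congr fun z => ?_
  rw [ENNReal.toReal_ofReal (exp_nonneg _)]
  rfl

end PeriodizedGaussian

open PeriodizedGaussian

/-- For a full lattice `Λ ⊂ ℝⁿ` with invertible generator matrix `M`
and `σ > 0`, the maximum over `x` of the periodized Gaussian `g_n(Λ + x; σ)` is
attained at lattice points: `g_n(Λ + x; σ) ≤ g_n(Λ; σ)` for all `x ∈ ℝⁿ`. -/
theorem periodized_gaussian_le_at_lattice (n : ℕ)
    (M : Matrix (Fin n) (Fin n) ℝ) (hM : IsUnit M.det) (σ : ℝ) (hσ : 0 < σ)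
    (x : Fin n → ℝ) :
    (∑' z : Fin n → ℤ, gaussDensity n σ (M.mulVec (fun j => (z j : ℝ)) + x))
      ≤ ∑' z : Fin n → ℤ, gaussDensity n σ (M.mulVec (fun j => (z j : ℝ))) := by
  have hbdd := iSup_periodize_gaussWeight_ne_top hM (t := 2 * σ ^ 2) (by positivity)
  have hle := periodize_le_periodize_zero (latticeMap M) (gaussWeight_mul_gaussWeight _) hbdd x
  have h0 := tsum_gaussDensity_eq n σ M 0
  simp only [add_zero] at h0
  rw [tsum_gaussDensity_eq, h0]
  exact mul_le_mul_of_nonneg_left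
    (ENNReal.toReal_mono (ne_top_of_le_ne_top hbdd (le_iSup _ 0)) hle) (by positivity)
end

section
/- Let X and Y be random variables with X taking values in a finite message space M with |M| ≥ 4, Y taking values in ℝ^n with conditional densities ρ_{Y|X=m}. Suppose there exists a probability density ρ̃ on ℝ^n such that for all m ∈ M the total variational distance V(ρ_{Y|X=m}, ρ̃) = ∫|ρ_{Y|X=m}(y) − ρ̃(y)| dy is at most δ, where δ ≤ e^{-1}/2. Then the mutual information satisfies I[X; Y] ≤ 2δ log|M| − 2δ log(2δ). -/
/-!
Fix `y` and write `ρ̄ = ∑ₘ p m * ρ m y` and `q m = p m * ρ m y / ρ̄` (the posterior of `X` given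
`Y = y`). With `η = negMulLog` the integrand equals `ρ̄ (∑ₘ η (p m) - η (q m)) + ∑ₘ p m log (p m) (ρ̄ - ρ m y)`,
and the last sum integrates to zero. For `0 < c ≤ e⁻²` each difference `η (p m) - η (q m)` is at most
`c + (-log c - 1) |p m - q m|` (subadditivity of `η` and its tangent at `c`), and
`ρ̄ |p m - q m| = p m |ρ m y - ρ̄|` integrates to at most `2δ`, as `ρ m` and the mixture `ρ̄` are both
`δ`-close to `ρ̃`. Hence `I[X;Y] ≤ |𝓜| c + (-log c - 1) 2δ`, and `c = 2δ / |𝓜|`, admissible since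
`|𝓜| ≥ 4 > e`, gives the bound.
-/

open MeasureTheory

/-- Mutual information `I[X;Y]` between a discrete random variable `X` with prior
`p` on a finite message space and a continuous `ℝⁿ`-valued `Y` with conditional
densities `ρ m`:  `I[X;Y] = ∫ Σ_m p(m) ρ_m(y) log(ρ_m(y)/ρ̄(y)) dy`, where
`ρ̄ = Σ_m p(m) ρ_m` is the density of `Y`. -/
noncomputable def mutualInfoDC {𝓜 : Type*} [Fintype 𝓜] (n : ℕ)
    (p : 𝓜 → ℝ) (ρ : 𝓜 → (Fin n → ℝ) → ℝ) : ℝ :=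
  ∫ y : Fin n → ℝ,
    ∑ m, p m * ρ m y * Real.log (ρ m y / ∑ m', p m' * ρ m' y)

namespace Real

lemma negMulLog_le_add_mul {c x : ℝ} (hc : 0 < c) (hx : 0 ≤ x) :
    negMulLog x ≤ c + (-log c - 1) * x := by
  have h := negMulLog_le_one_sub_self (div_nonneg hx hc.le)
  have hx' : x = c * (x / c) := by field_simp
  rw [hx', negMulLog_mul]
  calc x / c * negMulLog c + c * negMulLog (x / c) ≤ x / c * negMulLog c + c * (1 - x / c) := by
        gcongr
    _ = c + (-log c - 1) * (c * (x / c)) := by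
        rw [negMulLog]; field_simp; ring

lemma mul_log_le_mul_log_add {x y : ℝ} (hx : 0 ≤ x) (hy : 0 ≤ y) :
    x * log x ≤ x * log (x + y) := by
  rcases hx.eq_or_lt with rfl | hx
  · simp
  · exact mul_le_mul_of_nonneg_left (log_le_log hx (by linarith)) hx.le

lemma negMulLog_add_le {x y : ℝ} (hx : 0 ≤ x) (hy : 0 ≤ y) :
    negMulLog (x + y) ≤ negMulLog x + negMulLog y := by
  have h₁ := mul_log_le_mul_log_add hx hy
  have h₂ := mul_log_le_mul_log_add hy hx
  rw [add_comm y] at h₂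
  simp only [negMulLog]
  linarith

lemma negMulLog_sub_negMulLog_le {a b c : ℝ} (ha : 0 ≤ a) (hb : 0 ≤ b) (hb1 : b ≤ 1)
    (hc : 0 < c) (hce : c ≤ exp (-2)) :
    negMulLog a - negMulLog b ≤ c + (-log c - 1) * |a - b| := by
  have hs : 1 ≤ -log c - 1 := by linarith [(log_le_iff_le_exp hc).2 hce]
  rcases le_total b a with hba | hab
  · have hsub := negMulLog_add_le hb (sub_nonneg.2 hba)
    rw [add_sub_cancel] at hsub
    have htan := negMulLog_le_add_mul hc (sub_nonneg.2 hba)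
    rw [abs_of_nonneg (sub_nonneg.2 hba)]
    linarith
  · rcases hb.eq_or_lt with rfl | hb
    · rw [le_antisymm hab ha]
      simp [hc.le]
    -- the tangent at `b` gives `η a - η b ≤ (1 + log b) (b - a) ≤ b - a`, hence the slope `≥ 1`
    have htan := negMulLog_le_add_mul hb ha
    have hlogb : log b ≤ 0 := log_nonpos hb.le hb1
    rw [abs_of_nonpos (sub_nonpos.2 hab)]
    simp only [negMulLog] at htan ⊢
    nlinarith [mul_nonneg (sub_nonneg.2 hab) (sub_nonneg.2 hs)]

lemma mul_mul_log_div_le {p r R c : ℝ} (hp : 0 ≤ p) (hr : 0 ≤ r) (hpr : p * r ≤ R)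
    (hc : 0 < c) (hce : c ≤ exp (-2)) :
    p * r * log (r / R) ≤ c * R + (-log c - 1) * (p * |r - R|) + p * log p * (R - r) := by
  rcases (mul_nonneg hp hr).trans hpr |>.eq_or_lt with rfl | hR
  · have hpr0 : p * r = 0 := le_antisymm hpr (mul_nonneg hp hr)
    rw [sub_zero, abs_of_nonneg hr]
    linear_combination (log (r / 0) + log c + 1 + log p) * hpr0
  set q := p * (r / R) with hq_def
  have hq : 0 ≤ q := by positivity
  have hq1 : q ≤ 1 := by rwa [hq_def, mul_div_assoc', div_le_one hR]
  have hdist : R * |p - q| = p * |r - R| := by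
    calc R * |p - q| = |R * (p - q)| := by rw [abs_mul, abs_of_pos hR]
      _ = |p * (R - r)| := by rw [hq_def]; congr 1; field_simp
      _ = p * |r - R| := by rw [abs_mul, abs_of_nonneg hp, abs_sub_comm]
  have hentropy : R * negMulLog q = -(r * p * log p) - p * r * log (r / R) := by
    rw [negMulLog_mul, negMulLog, negMulLog]; field_simp; ring
  calc p * r * log (r / R) = R * (negMulLog p - negMulLog q) + p * log p * (R - r) := by
        rw [mul_sub, hentropy, negMulLog]; ring
    _ ≤ R * (c + (-log c - 1) * |p - q|) + p * log p * (R - r) := by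
        gcongr
        exact negMulLog_sub_negMulLog_le hp hq hq1 hc hce
    _ = c * R + (-log c - 1) * (p * |r - R|) + p * log p * (R - r) := by
        rw [mul_add, mul_left_comm, hdist]; ring

end Real

section Mixture

open Finset Real

variable {α ι : Type*} [MeasurableSpace α] {μ : Measure α} [Fintype ι] {p : ι → ℝ}

lemma integral_sum_mul_le (hp : ∀ i, 0 ≤ p i) (hp1 : ∑ i, p i = 1) {F : ι → α → ℝ}
    (hF : ∀ i, Integrable (F i) μ) {δ : ℝ} (h : ∀ i, ∫ x, F i x ∂μ ≤ δ) :
    ∫ x, ∑ i, p i * F i x ∂μ ≤ δ := by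
  rw [integral_finsetSum _ fun i _ ↦ (hF i).const_mul (p i)]
  simp only [integral_const_mul]
  calc ∑ i, p i * ∫ x, F i x ∂μ ≤ ∑ i, p i * δ := by gcongr with i; exacts [hp i, h i]
    _ = δ := by rw [← sum_mul, hp1, one_mul]

variable {f : ι → α → ℝ}

lemma integral_abs_mixture_sub_le (hp : ∀ i, 0 ≤ p i) (hp1 : ∑ i, p i = 1)
    (hf : ∀ i, Integrable (f i) μ) {g : α → ℝ} (hg : Integrable g μ) {δ : ℝ}
    (h : ∀ i, ∫ x, |f i x - g x| ∂μ ≤ δ) :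
    ∫ x, |∑ i, p i * f i x - g x| ∂μ ≤ δ := by
  have hdiff : ∀ i, Integrable (fun x ↦ |f i x - g x|) μ := fun i ↦ ((hf i).sub hg).abs
  refine le_trans (integral_mono ?_ (integrable_finsetSum _ fun i _ ↦ (hdiff i).const_mul (p i))
    fun x ↦ ?_) (integral_sum_mul_le hp hp1 hdiff h)
  · exact ((integrable_finsetSum _ fun i _ ↦ (hf i).const_mul (p i)).sub hg).abs
  · calc |∑ i, p i * f i x - g x| = |∑ i, p i * (f i x - g x)| := by
          simp only [mul_sub, sum_sub_distrib, ← sum_mul, hp1, one_mul]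
      _ ≤ ∑ i, |p i * (f i x - g x)| := abs_sum_le_sum_abs _ _
      _ = ∑ i, p i * |f i x - g x| := by simp only [abs_mul, abs_of_nonneg (hp _)]

lemma integral_abs_sub_mixture_le (hp : ∀ i, 0 ≤ p i) (hp1 : ∑ i, p i = 1)
    (hf : ∀ i, Integrable (f i) μ) {g : α → ℝ} (hg : Integrable g μ) {δ : ℝ}
    (h : ∀ i, ∫ x, |f i x - g x| ∂μ ≤ δ) (i : ι) :
    ∫ x, |f i x - ∑ j, p j * f j x| ∂μ ≤ 2 * δ := by
  have hmix : Integrable (fun x ↦ ∑ j, p j * f j x) μ :=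
    integrable_finsetSum _ fun j _ ↦ (hf j).const_mul (p j)
  calc ∫ x, |f i x - ∑ j, p j * f j x| ∂μ
      ≤ ∫ x, (|f i x - g x| + |∑ j, p j * f j x - g x|) ∂μ := by
        refine integral_mono ((hf i).sub hmix).abs
          (((hf i).sub hg).abs.add (hmix.sub hg).abs) fun x ↦ ?_
        simpa only [abs_sub_comm (g x)] using abs_sub_le (f i x) (g x) (∑ j, p j * f j x)
    _ = ∫ x, |f i x - g x| ∂μ + ∫ x, |∑ j, p j * f j x - g x| ∂μ :=
        integral_add ((hf i).sub hg).abs (hmix.sub hg).abs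
    _ ≤ δ + δ := add_le_add (h i) (integral_abs_mixture_sub_le hp hp1 hf hg h)
    _ = 2 * δ := by ring


lemma integral_sum_mul_mul_log_div_le (hp : ∀ i, 0 ≤ p i) (hp1 : ∑ i, p i = 1)
    (hf_nonneg : ∀ i x, 0 ≤ f i x) (hf : ∀ i, Integrable (f i) μ) (hf1 : ∀ i, ∫ x, f i x ∂μ = 1)
    {ε : ℝ} (hε : ∀ i, ∫ x, |f i x - ∑ j, p j * f j x| ∂μ ≤ ε) {c : ℝ} (hc : 0 < c)
    (hce : c ≤ exp (-2)) :
    ∫ x, ∑ i, p i * f i x * log (f i x / ∑ j, p j * f j x) ∂μ ≤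
      Fintype.card ι * c + (-log c - 1) * ε := by
  set s := -log c - 1
  set mix := fun x ↦ ∑ j, p j * f j x
  have hs : 0 ≤ s := by linarith [(log_le_iff_le_exp hc).2 hce]
  have hmix : Integrable mix μ := integrable_finsetSum _ fun j _ ↦ (hf j).const_mul (p j)
  have hmix1 : ∫ x, mix x ∂μ = 1 := by
    simp only [mix, integral_finsetSum _ fun j _ ↦ (hf j).const_mul (p j), integral_const_mul,
      hf1, mul_one, hp1]
  set G := fun i x ↦ c * mix x + s * (p i * |f i x - mix x|) + p i * log (p i) * (mix x - f i x)
  have hG : ∀ i, Integrable (G i) μ := fun i ↦ by have := hf i; fun_prop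
  have hGi : ∀ i, ∫ x, G i x ∂μ ≤ c + s * (p i * ε) := by
    intro i
    have hfi := hf i
    calc ∫ x, G i x ∂μ = c * ∫ x, mix x ∂μ + s * (p i * ∫ x, |f i x - mix x| ∂μ)
          + p i * log (p i) * (∫ x, mix x ∂μ - ∫ x, f i x ∂μ) := by
          simp only [G]
          rw [integral_add (by fun_prop) (by fun_prop), integral_add (by fun_prop) (by fun_prop),
            integral_const_mul, integral_const_mul, integral_const_mul, integral_const_mul,
            integral_sub hmix hfi]
      _ ≤ c + s * (p i * ε) := by
          rw [hmix1, hf1, sub_self, mul_zero, add_zero, mul_one]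
          gcongr
          exacts [hp i, hε i]
  by_cases hF : Integrable (fun x ↦ ∑ i, p i * f i x * log (f i x / mix x)) μ
  · calc ∫ x, ∑ i, p i * f i x * log (f i x / mix x) ∂μ ≤ ∫ x, ∑ i, G i x ∂μ :=
          integral_mono hF (integrable_finsetSum _ fun i _ ↦ hG i) fun x ↦
            sum_le_sum fun i _ ↦ mul_mul_log_div_le (hp i) (hf_nonneg i x)
              (single_le_sum (fun j _ ↦ mul_nonneg (hp j) (hf_nonneg j x)) (mem_univ i)) hc hce
      _ = ∑ i, ∫ x, G i x ∂μ := integral_finsetSum _ fun i _ ↦ hG i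
      _ ≤ ∑ i, (c + s * (p i * ε)) := sum_le_sum fun i _ ↦ hGi i
      _ = Fintype.card ι * c + s * ε := by
          rw [sum_add_distrib, ← mul_sum, ← sum_mul, hp1, sum_const, card_univ, nsmul_eq_mul,
            one_mul]
  · obtain ⟨i⟩ : Nonempty ι := by
      by_contra h
      simp [not_nonempty_iff.1 h] at hp1
    have hε0 : 0 ≤ ε := (integral_nonneg fun _ ↦ abs_nonneg _).trans (hε i)
    rw [integral_undef hF]
    positivity

end Mixture

lemma Real.le_mul_log_sub_mul_log_of_forall_le {I M ε : ℝ} (hM : 0 < M) (hε : 0 ≤ ε)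
    (hεM : ε / M ≤ exp (-2))
    (h : ∀ c, 0 < c → c ≤ exp (-2) → I ≤ M * c + (-log c - 1) * ε) :
    I ≤ ε * log M - ε * log ε := by
  rcases hε.eq_or_lt with rfl | hε
  · have hlim : Filter.Tendsto (fun c ↦ M * c) (nhdsWithin 0 (Set.Ioi 0)) (nhds 0) := by
      simpa using ((continuous_const_mul M).tendsto 0).mono_left nhdsWithin_le_nhds
    refine (ge_of_tendsto hlim ?_).trans_eq (by simp)
    filter_upwards [Ioo_mem_nhdsGT (exp_pos (-2))] with c hc
    simpa using h c hc.1 hc.2.le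
  · calc I ≤ M * (ε / M) + (-log (ε / M) - 1) * ε := h _ (by positivity) hεM
      _ = ε * log M - ε * log ε := by rw [log_div hε.ne' hM.ne']; field_simp; ring

open Real in
theorem mutual_info_bound_from_variational_distance_general
    {𝓜 : Type*} [Fintype 𝓜] (h𝓜 : 4 ≤ Fintype.card 𝓜) (n : ℕ)
    (p : 𝓜 → ℝ) (hp : ∀ m, 0 ≤ p m) (hp1 : ∑ m, p m = 1)
    (ρ : 𝓜 → (Fin n → ℝ) → ℝ)
    (hρnn : ∀ m y, 0 ≤ ρ m y)
    (hρ1 : ∀ m, ∫ y, ρ m y = 1)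
    (ρtil : (Fin n → ℝ) → ℝ)
    (hρt1 : ∫ y, ρtil y = 1)
    (δ : ℝ) (hδ : δ ≤ Real.exp (-1) / 2)
    (hV : ∀ m, ∫ y, |ρ m y - ρtil y| ≤ δ) :
    mutualInfoDC n p ρ ≤
      2 * δ * Real.log (Fintype.card 𝓜) - 2 * δ * Real.log (2 * δ) := by
  have hρ : ∀ m, Integrable (ρ m) := fun m ↦ .of_integral_ne_zero (by simp [hρ1])
  have hρtil : Integrable ρtil := .of_integral_ne_zero (by simp [hρt1])
  have hM : (4 : ℝ) ≤ Fintype.card 𝓜 := by exact_mod_cast h𝓜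
  obtain ⟨m⟩ : Nonempty 𝓜 := Fintype.card_pos_iff.1 (by omega)
  have hδ0 : 0 ≤ δ := (integral_nonneg fun _ ↦ abs_nonneg _).trans (hV m)
  have he : exp (-1) ≤ 4 * exp (-2) := by
    rw [show (-1 : ℝ) = 1 + -2 by norm_num, exp_add]
    gcongr
    linarith [exp_one_lt_d9]
  refine le_mul_log_sub_mul_log_of_forall_le (by positivity) (by positivity) ?_
    fun c hc hce ↦ integral_sum_mul_mul_log_div_le hp hp1 hρnn hρ hρ1
      (integral_abs_sub_mixture_le hp hp1 hρ hρtil hV) hc hce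
  calc 2 * δ / Fintype.card 𝓜 ≤ 2 * δ / 4 := by gcongr
    _ ≤ exp (-2) := by linarith

/-- Lemma 2 of Ling et al., with the explicit hypothesis `δ ≤ e⁻¹/2`:
if for every message `m` the conditional density `ρ_m` of `Y` is within variational
distance `δ ≤ e⁻¹/2` of a fixed density `ρ̃`, and `|𝓜| ≥ 4`, then
`I[X;Y] ≤ 2δ log|𝓜| − 2δ log(2δ)` (natural logarithm). -/
theorem mutual_info_bound_from_variational_distance
    {𝓜 : Type*} [Fintype 𝓜] (h𝓜 : 4 ≤ Fintype.card 𝓜) (n : ℕ)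
    (p : 𝓜 → ℝ) (hp : ∀ m, 0 ≤ p m) (hp1 : ∑ m, p m = 1)
    (ρ : 𝓜 → (Fin n → ℝ) → ℝ)
    (hρmeas : ∀ m, Measurable (ρ m)) (hρnn : ∀ m y, 0 ≤ ρ m y)
    (hρ1 : ∀ m, ∫ y, ρ m y = 1)
    (ρtil : (Fin n → ℝ) → ℝ) (hρtmeas : Measurable ρtil)
    (hρtnn : ∀ y, 0 ≤ ρtil y) (hρt1 : ∫ y, ρtil y = 1)
    (δ : ℝ) (hδ : δ ≤ Real.exp (-1) / 2)
    (hV : ∀ m, ∫ y, |ρ m y - ρtil y| ≤ δ) :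
    mutualInfoDC n p ρ ≤
      2 * δ * Real.log (Fintype.card 𝓜) - 2 * δ * Real.log (2 * δ) :=
  mutual_info_bound_from_variational_distance_general h𝓜 n p hp hp1 ρ hρnn hρ1 ρtil hρt1 δ hδ hV
end

section
/- Let M be a message with arbitrary distribution on a finite set M with |M| ≥ 4, let H be a random variable independent of M, and suppose Y is a random variable such that for each realization h of H, conditionally on H = h, the mutual information I[M; Y | H = h] ≤ 2ε(h)(log|M| − log(2ε(h))) whenever ε(h) ≤ e^{-1}/2, and I[M; Y | H = h] ≤ log|M| always, where ε(h) ≥ 0 is measurable in h. If E[ε(H)] ≤ e^{-1}/2, then I[M; (Y, H)] ≤ 2(e+1)·E[ε(H)]·log|M| − 2·E[ε(H)]·log(2·E[ε(H)]). -/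
/-!
Split `Ω` along `A = {ε ≤ e⁻¹/2}`. On `A` the pointwise bound integrates to
`2 log K ∫_A ε - ∫_A 2ε log(2ε)`, and Jensen's inequality for the convex function `x log x`
bounds the last integral below by `2c log(2c)` with `c = E[ε]`: first by `(∫_A 2ε) log(∫_A 2ε)`,
then by `2c log(2c)` because `x log x` decreases on `[0, e⁻¹]` and `∫_A 2ε ≤ 2c ≤ e⁻¹`.
On `Aᶜ` the crude bound `I ≤ log K` is paid for by Markov's inequality, `P(Aᶜ) ≤ 2e·c`.
-/

open MeasureTheory Real

namespace Real

theorem antitoneOn_mul_log : AntitoneOn (fun x ↦ x * log x) (Set.Icc 0 (exp (-1))) := by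
  refine antitoneOn_of_deriv_nonpos (convex_Icc _ _) continuous_mul_log.continuousOn
    (differentiableOn_mul_log.mono fun x hx ↦ ?_) fun x hx ↦ ?_
  · rw [interior_Icc] at hx
    exact hx.1.ne'
  · rw [interior_Icc] at hx
    rw [deriv_mul_log hx.1.ne']
    have : log x < -1 := by
      rw [← log_exp (-1)]
      exact log_lt_log hx.1 hx.2
    linarith

end Real

section

variable {α : Type*} [MeasurableSpace α] {μ : Measure α} {f : α → ℝ}

theorem mul_log_setIntegral_le_setIntegral_mul_log [IsProbabilityMeasure μ] {s : Set α}
    (hs : MeasurableSet s) (hf : ∀ x ∈ s, 0 ≤ f x) (hfi : IntegrableOn f s μ)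
    (hfl : IntegrableOn (fun x ↦ f x * log (f x)) s μ) :
    (∫ x in s, f x ∂μ) * log (∫ x in s, f x ∂μ) ≤ ∫ x in s, f x * log (f x) ∂μ := by
  have hmul_log_indicator :
      (fun x ↦ s.indicator f x * log (s.indicator f x)) = s.indicator fun x ↦ f x * log (f x) := by
    ext x
    by_cases hx : x ∈ s <;> simp [hx]
  rw [← integral_indicator hs, ← integral_indicator hs, ← hmul_log_indicator]
  refine convexOn_mul_log.map_integral_le continuous_mul_log.continuousOn isClosed_Ici
    (ae_of_all _ fun x ↦ Set.indicator_nonneg hf x) ((integrable_indicator_iff hs).2 hfi) ?_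
  rw [Function.comp_def, hmul_log_indicator]
  exact (integrable_indicator_iff hs).2 hfl

theorem mul_log_integral_le_setIntegral_mul_log [IsProbabilityMeasure μ] {s : Set α}
    (hs : MeasurableSet s) (hf : ∀ x, 0 ≤ f x) (hfi : Integrable f μ)
    (hfl : IntegrableOn (fun x ↦ f x * log (f x)) s μ)
    (hmean : ∫ x, f x ∂μ ≤ exp (-1)) :
    (∫ x, f x ∂μ) * log (∫ x, f x ∂μ) ≤ ∫ x in s, f x * log (f x) ∂μ := by
  have hs_nonneg : 0 ≤ ∫ x in s, f x ∂μ := setIntegral_nonneg hs fun x _ ↦ hf x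
  have hs_le : ∫ x in s, f x ∂μ ≤ ∫ x, f x ∂μ := setIntegral_le_integral hfi (ae_of_all _ hf)
  calc (∫ x, f x ∂μ) * log (∫ x, f x ∂μ)
      ≤ (∫ x in s, f x ∂μ) * log (∫ x in s, f x ∂μ) :=
        antitoneOn_mul_log ⟨hs_nonneg, hs_le.trans hmean⟩
          ⟨hs_nonneg.trans hs_le, hmean⟩ hs_le
    _ ≤ ∫ x in s, f x * log (f x) ∂μ :=
        mul_log_setIntegral_le_setIntegral_mul_log hs (fun x _ ↦ hf x) hfi.integrableOn hfl

theorem measureReal_lt_le_integral_div [IsFiniteMeasure μ] {a : ℝ} (ha : 0 < a)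
    (hf : ∀ x, 0 ≤ f x) (hfi : Integrable f μ) : μ.real {x | a < f x} ≤ (∫ x, f x ∂μ) / a := by
  rw [le_div_iff₀ ha, mul_comm]
  calc a * μ.real {x | a < f x} ≤ a * μ.real {x | a ≤ f x} :=
        mul_le_mul_of_nonneg_left (measureReal_mono fun x (hx : a < f x) ↦ hx.le) ha.le
    _ ≤ ∫ x, f x ∂μ := mul_meas_ge_le_integral_of_nonneg (ae_of_all _ hf) hfi a

theorem setIntegral_le_measureReal_mul [IsFiniteMeasure μ] {s : Set α} {C : ℝ}
    (hs : MeasurableSet s) (hfi : IntegrableOn f s μ) (hf : ∀ x ∈ s, f x ≤ C) :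
    ∫ x in s, f x ∂μ ≤ μ.real s * C := by
  rw [← smul_eq_mul, ← setIntegral_const]
  exact setIntegral_mono_on hfi (integrableOn_const (measure_ne_top _ _)) hs hf

end

/-- Theorem 1, mod-Λ_s channel, abstract form: let `M` be a message
on a finite set of cardinality `K ≥ 4` and `H` (modelled by the probability space
`Ω`) independent of `M`, so that `I[M;(Y,H)] = E_H[I[M;Y|H=h]]`; write
`I h := I[M;Y|H=h]`.  If `I h ≤ 2ε(h)(log K − log(2ε(h)))` whenever
`ε(h) ≤ e⁻¹/2`, and `I h ≤ log K` always, with `ε ≥ 0` measurable and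
`E[ε] ≤ e⁻¹/2`, then
`I[M;(Y,H)] ≤ 2(e+1)·E[ε]·log K − 2·E[ε]·log(2·E[ε])` (natural logarithm). -/
theorem info_bound_mod_lattice_channel
    {Ω : Type*} [MeasureSpace Ω] [IsProbabilityMeasure (volume : Measure Ω)]
    (K : ℕ) (hK : 4 ≤ K) (I ε : Ω → ℝ)
    (hεnn : ∀ ω, 0 ≤ ε ω) (hεmeas : Measurable ε)
    (hεint : Integrable ε) (hIint : Integrable I)
    (hint2 : Integrable (fun ω => ε ω * Real.log (2 * ε ω)))
    (hbound1 : ∀ ω, ε ω ≤ Real.exp (-1) / 2 →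
      I ω ≤ 2 * ε ω * (Real.log K - Real.log (2 * ε ω)))
    (hbound2 : ∀ ω, I ω ≤ Real.log K)
    (hE : ∫ ω, ε ω ≤ Real.exp (-1) / 2) :
    ∫ ω, I ω ≤
      2 * (Real.exp 1 + 1) * (∫ ω, ε ω) * Real.log K
        - 2 * (∫ ω, ε ω) * Real.log (2 * ∫ ω, ε ω) := by
  set c := ∫ ω, ε ω
  set A := {ω | ε ω ≤ exp (-1) / 2}
  have hA : MeasurableSet A := hεmeas measurableSet_Iic
  have hlogK : 0 ≤ log K := log_nonneg (by exact_mod_cast (by omega : 1 ≤ K))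
  have hεA : ∫ ω in A, ε ω ≤ c := setIntegral_le_integral hεint (ae_of_all _ hεnn)
  have hmarkov : volume.real Aᶜ ≤ 2 * exp 1 * c := by
    have hAc : Aᶜ = {ω | exp (-1) / 2 < ε ω} := by ext; simp [A]
    calc volume.real Aᶜ ≤ c / (exp (-1) / 2) :=
          hAc ▸ measureReal_lt_le_integral_div (by positivity) hεnn hεint
      _ = 2 * exp 1 * c := by rw [exp_neg]; field_simp
  have hjensen : 2 * c * log (2 * c) ≤ 2 * ∫ ω in A, ε ω * log (2 * ε ω) := by
    have h := mul_log_integral_le_setIntegral_mul_log (μ := volume) (f := fun ω ↦ 2 * ε ω) hA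
      (fun ω ↦ by linarith [hεnn ω]) (hεint.const_mul 2)
      (by simpa only [mul_assoc] using (hint2.const_mul 2).integrableOn)
      (by rw [integral_const_mul]; linarith)
    simpa only [integral_const_mul, mul_assoc] using h
  have hI_A : ∫ ω in A, I ω ≤
      2 * log K * (∫ ω in A, ε ω) - 2 * ∫ ω in A, ε ω * log (2 * ε ω) := by
    calc ∫ ω in A, I ω ≤ ∫ ω in A, (2 * log K * ε ω - 2 * (ε ω * log (2 * ε ω))) :=
          setIntegral_mono_on hIint.integrableOn
            ((hεint.const_mul _).sub (hint2.const_mul 2)).integrableOn hA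
            fun ω hω ↦ by linarith [hbound1 ω hω]
      _ = _ := by
          rw [integral_sub (hεint.const_mul _).integrableOn (hint2.const_mul 2).integrableOn,
            integral_const_mul, integral_const_mul]
  have hI_Ac : ∫ ω in Aᶜ, I ω ≤ volume.real Aᶜ * log K :=
    setIntegral_le_measureReal_mul hA.compl hIint.integrableOn fun ω _ ↦ hbound2 ω
  rw [← integral_add_compl hA hIint]
  nlinarith [mul_le_mul_of_nonneg_right hmarkov hlogK, mul_le_mul_of_nonneg_right hεA hlogK]
end

section
/- Let M be a message with arbitrary distribution on a finite set M with |M| ≥ 4, let H be independent of M, and suppose that conditionally on H = h, I[M; Y | H = h] ≤ 8ε(h)(log|M| − log(8ε(h))) whenever ε(h) ≤ 1/(8e), and I[M; Y | H = h] ≤ log|M| always, where ε(h) ≥ 0. If E := E[ε(H)] ≤ 1/(8e), then I[M; (Y, H)] ≤ 8(1+e)·E·log|M| − 8E·log(8E). -/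
open MeasureTheory Real

/-!
With `f := 8ε` and `L := log K`, truncate `f` at `exp (-1)`. Below the threshold the
hypothesis gives `I ≤ f L - f log f`; above it, `I ≤ L ≤ e f L` (Markov's inequality in
pointwise form). After integrating, Jensen's inequality for the convex function `x log x`
bounds the expectation of the truncated `-f log f` by its value at the mean of the truncation,
and since `x log x` is decreasing on `[0, exp (-1)]`, that value is at most `-(∫ f) log (∫ f)`.
-/

theorem le_mul_sub_min_mul_log {x y L : ℝ} (hx : 0 ≤ x) (hL : 0 ≤ L)
    (hsmall : x ≤ exp (-1) → y ≤ x * L - x * log x) (hlarge : y ≤ L) :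
    y ≤ (1 + exp 1) * L * x - min x (exp (-1)) * log (min x (exp (-1))) := by
  rcases le_or_gt x (exp (-1)) with hxc | hxc
  · have : 0 ≤ exp 1 * L * x := by positivity
    rw [min_eq_left hxc]
    linarith [hsmall hxc]
  · have hex : 1 ≤ exp 1 * x := by
      rw [exp_neg] at hxc
      exact (inv_le_iff_one_le_mul₀' (exp_pos 1)).mp hxc.le
    have : L ≤ exp 1 * x * L := le_mul_of_one_le_left hL hex
    rw [min_eq_right hxc.le, log_exp]
    linarith [exp_pos (-1), mul_nonneg hx hL]

section

variable {Ω : Type*} {m : MeasurableSpace Ω} {μ : Measure Ω}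

theorem mul_log_integral_le_integral_mul_log [IsProbabilityMeasure μ] {g : Ω → ℝ}
    (hg0 : ∀ ω, 0 ≤ g ω) (hg : Integrable g μ) (hgl : Integrable (fun ω ↦ g ω * log (g ω)) μ) :
    (∫ ω, g ω ∂μ) * log (∫ ω, g ω ∂μ) ≤ ∫ ω, g ω * log (g ω) ∂μ :=
  convexOn_mul_log.map_integral_le continuous_mul_log.continuousOn isClosed_Ici
    (ae_of_all _ hg0) hg hgl

theorem integrable_mul_log_of_nonneg_of_le_one [IsFiniteMeasure μ] {g : Ω → ℝ}
    (hg : AEStronglyMeasurable g μ) (hg0 : ∀ ω, 0 ≤ g ω) (hg1 : ∀ ω, g ω ≤ 1) :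
    Integrable (fun ω ↦ g ω * log (g ω)) μ := by
  refine .of_bound (continuous_mul_log.comp_aestronglyMeasurable hg) 1 (ae_of_all _ fun ω ↦ ?_)
  rcases (hg0 ω).eq_or_lt with h0 | hpos
  · simp [← h0]
  · rw [norm_eq_abs, mul_comm]
    exact (abs_log_mul_self_lt _ hpos (hg1 ω)).le

theorem integral_le_of_le_mul_sub_mul_log [IsProbabilityMeasure μ] {I f : Ω → ℝ} {L : ℝ}
    (hL : 0 ≤ L) (hf0 : ∀ ω, 0 ≤ f ω) (hf : Integrable f μ) (hI : Integrable I μ)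
    (hsmall : ∀ ω, f ω ≤ exp (-1) → I ω ≤ f ω * L - f ω * log (f ω))
    (hlarge : ∀ ω, I ω ≤ L) (hE : ∫ ω, f ω ∂μ ≤ exp (-1)) :
    ∫ ω, I ω ∂μ ≤ (1 + exp 1) * L * (∫ ω, f ω ∂μ) - (∫ ω, f ω ∂μ) * log (∫ ω, f ω ∂μ) := by
  set t : Ω → ℝ := fun ω ↦ min (f ω) (exp (-1))
  have ht0 : ∀ ω, 0 ≤ t ω := fun ω ↦ le_min (hf0 ω) (exp_pos _).le
  have htc : ∀ ω, t ω ≤ exp (-1) := fun ω ↦ min_le_right _ _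
  have ht : Integrable t μ :=
    hf.mono ((continuous_id.min continuous_const : Continuous fun x : ℝ ↦ min x (exp (-1)))
      |>.comp_aestronglyMeasurable hf.1)
      (ae_of_all _ fun ω ↦ by
        rw [norm_of_nonneg (ht0 ω), norm_of_nonneg (hf0 ω)]
        exact min_le_left _ _)
  have htl : Integrable (fun ω ↦ t ω * log (t ω)) μ :=
    integrable_mul_log_of_nonneg_of_le_one ht.1 ht0
      fun ω ↦ (htc ω).trans (exp_le_one_iff.mpr (by norm_num))
  have htf : ∫ ω, t ω ∂μ ≤ ∫ ω, f ω ∂μ := integral_mono ht hf fun ω ↦ min_le_left _ _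
  have hmono : (∫ ω, f ω ∂μ) * log (∫ ω, f ω ∂μ) ≤ (∫ ω, t ω ∂μ) * log (∫ ω, t ω ∂μ) :=
    mul_log_strictAntiOn.antitoneOn ⟨integral_nonneg ht0, htf.trans hE⟩
      ⟨integral_nonneg hf0, hE⟩ htf
  calc ∫ ω, I ω ∂μ ≤ ∫ ω, ((1 + exp 1) * L * f ω - t ω * log (t ω)) ∂μ :=
        integral_mono hI ((hf.const_mul _).sub htl) fun ω ↦
          le_mul_sub_min_mul_log (hf0 ω) hL (hsmall ω) (hlarge ω)
    _ = (1 + exp 1) * L * (∫ ω, f ω ∂μ) - ∫ ω, t ω * log (t ω) ∂μ := by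
        rw [integral_sub (hf.const_mul _) htl, integral_const_mul]
    _ ≤ _ := by linarith [mul_log_integral_le_integral_mul_log ht0 ht htl]

end

theorem info_bound_discrete_gaussian_coset_general
    {Ω : Type*} [MeasureSpace Ω] [IsProbabilityMeasure (volume : Measure Ω)]
    (K : ℕ) (hK : 4 ≤ K) (I ε : Ω → ℝ)
    (hεnn : ∀ ω, 0 ≤ ε ω)
    (hεint : Integrable ε) (hIint : Integrable I)
    (hbound1 : ∀ ω, ε ω ≤ 1 / (8 * Real.exp 1) →
      I ω ≤ 8 * ε ω * (Real.log K - Real.log (8 * ε ω)))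
    (hbound2 : ∀ ω, I ω ≤ Real.log K)
    (hE : ∫ ω, ε ω ≤ 1 / (8 * Real.exp 1)) :
    ∫ ω, I ω ≤
      8 * (1 + Real.exp 1) * (∫ ω, ε ω) * Real.log K
        - 8 * (∫ ω, ε ω) * Real.log (8 * ∫ ω, ε ω) := by
  have hthreshold (x : ℝ) : x ≤ 1 / (8 * exp 1) ↔ 8 * x ≤ exp (-1) := by
    rw [exp_neg, ← one_div, le_div_iff₀ (by positivity), le_div_iff₀ (exp_pos 1)]
    constructor <;> intro h <;> linarith
  have hlogK : 0 ≤ log K := log_nonneg (by exact_mod_cast (by omega : 1 ≤ K))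
  have key := integral_le_of_le_mul_sub_mul_log (μ := volume) (f := fun ω ↦ 8 * ε ω) hlogK
    (fun ω ↦ by linarith [hεnn ω]) (hεint.const_mul 8) hIint
    (fun ω hω ↦ by linarith [hbound1 ω ((hthreshold _).mpr hω)]) hbound2
    (by rwa [integral_const_mul, ← hthreshold])
  rw [integral_const_mul] at key
  linarith

/-- Theorem 2, discrete Gaussian coset coding, abstract form: let `M`
be a message on a finite set of cardinality `K ≥ 4` and `H` (modelled by the
probability space `Ω`) independent of `M`, so that `I[M;(Y,H)] = E_H[I[M;Y|H=h]]`;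
write `I h := I[M;Y|H=h]`.  If `I h ≤ 8ε(h)(log K − log(8ε(h)))` whenever
`ε(h) ≤ 1/(8e)`, and `I h ≤ log K` always, with `ε ≥ 0` measurable and
`E := E[ε] ≤ 1/(8e)`, then
`I[M;(Y,H)] ≤ 8(1+e)·E·log K − 8E·log(8E)` (natural logarithm). -/
theorem info_bound_discrete_gaussian_coset
    {Ω : Type*} [MeasureSpace Ω] [IsProbabilityMeasure (volume : Measure Ω)]
    (K : ℕ) (hK : 4 ≤ K) (I ε : Ω → ℝ)
    (hεnn : ∀ ω, 0 ≤ ε ω) (hεmeas : Measurable ε)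
    (hεint : Integrable ε) (hIint : Integrable I)
    (hint2 : Integrable (fun ω => ε ω * Real.log (8 * ε ω)))
    (hbound1 : ∀ ω, ε ω ≤ 1 / (8 * Real.exp 1) →
      I ω ≤ 8 * ε ω * (Real.log K - Real.log (8 * ε ω)))
    (hbound2 : ∀ ω, I ω ≤ Real.log K)
    (hE : ∫ ω, ε ω ≤ 1 / (8 * Real.exp 1)) :
    ∫ ω, I ω ≤
      8 * (1 + Real.exp 1) * (∫ ω, ε ω) * Real.log K
        - 8 * (∫ ω, ε ω) * Real.log (8 * ∫ ω, ε ω) :=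
  info_bound_discrete_gaussian_coset_general K hK I ε hεnn hεint hIint hbound1 hbound2 hE
end
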